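/- arXiv:2405.01152 — 2 statements merged into one kernel-verified Lean document; each statement's English description precedes it below -/
import Mathlib

section
/- Let X ⊆ R * R[1] be a subcategory such that every object of R[1] admits a right X-approximation. Then X is two-term maximal R[1]-rigid if and only if X is two-term weak R[1]-cluster tilting. -/
open CategoryTheory CategoryTheory.Limits CategoryTheory.Pretriangulated

universe v u w

namespace RelCT

/-- Krull–Schmidt: every object decomposes as a finite biproduct of objects with local
endomorphism rings. -/
def KrullSchmidtCat (C : Type u) [Category.{v} C] [Preadditive C] : Prop :=
  ∀ X : C, ∃ (n : ℕ) (f : Fin n → C) (p : ∀ i, X ⟶ f i) (ι : ∀ i, f i ⟶ X),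
    (∀ i, ι i ≫ p i = 𝟙 (f i)) ∧ (∑ i, p i ≫ ι i) = 𝟙 X ∧
    ∀ i (φ : f i ⟶ f i), IsIso φ ∨ IsIso (𝟙 (f i) - φ)

/-- `Fac W`: objects admitting an epimorphism from an object of `W`. -/
def FacSet {Q : Type w} [Category Q] (W : Set Q) : Set Q :=
  {Y | ∃ X ∈ W, ∃ p : X ⟶ Y, Epi p}

/-- `Ext¹(X, F) = 0`, expressed as: every short exact sequence
`0 → F → E → X → 0` splits. -/
def Ext1Zero {Q : Type w} [Category Q] [Abelian Q] (X F : Q) : Prop :=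
  ∀ S : CategoryTheory.ShortComplex Q, S.ShortExact → (S.X₁ ≅ F) → (S.X₃ ≅ X) →
    ∃ r : S.X₂ ⟶ S.X₁, S.f ≫ r = 𝟙 S.X₁

variable {C : Type u} [Category.{v} C] [Preadditive C] [HasZeroObject C]
  [HasShift C ℤ] [∀ n : ℤ, (CategoryTheory.shiftFunctor C n).Additive] [Pretriangulated C]

/-- The shift `D[n]` of a collection of objects, closed under isomorphism. -/
def shiftSet (D : Set C) (n : ℤ) : Set C :=
  {X | ∃ Y ∈ D, Nonempty (X ≅ Y⟦n⟧)}

/-- `f` factors through an object of `D`. -/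
def Factors (D : Set C) {A B : C} (f : A ⟶ B) : Prop :=
  ∃ (Z : C) (g : A ⟶ Z) (h : Z ⟶ B), Z ∈ D ∧ f = g ≫ h

/-- `X * Y`: objects `M` admitting a distinguished triangle `A → M → B → A[1]`
with `A ∈ X`, `B ∈ Y`. -/
def star (X Y : Set C) : Set C :=
  {M | ∃ (A B : C) (f : A ⟶ M) (g : M ⟶ B) (h : B ⟶ A⟦(1:ℤ)⟧),
    A ∈ X ∧ B ∈ Y ∧ (Triangle.mk f g h ∈ distTriang C)}

/-- `R` is rigid: `Hom(R, R[1]) = 0`. -/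
def Rigid (R : Set C) : Prop :=
  ∀ ⦃A B : C⦄, A ∈ R → B ∈ R → ∀ f : A ⟶ B⟦(1:ℤ)⟧, f = 0

/-- `[R[1]](X, Y[1]) = 0` : every morphism from an object of `X` to a first shift of
an object of `Y` which factors through `R[1]` vanishes. -/
def RelRigid (R X Y : Set C) : Prop :=
  ∀ ⦃A B : C⦄, A ∈ X → B ∈ Y → ∀ f : A ⟶ B⟦(1:ℤ)⟧, Factors (shiftSet R 1) f → f = 0

/-- Closure of a collection of objects under finite direct sums and direct summands. -/
inductive addClosure (D : Set C) : C → Prop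
  | of {X : C} : X ∈ D → addClosure D X
  | zero {X : C} : IsZero X → addClosure D X
  | sum {X Y Z : C} : addClosure D X → addClosure D Y →
      (∃ (pX : Z ⟶ X) (pY : Z ⟶ Y) (iX : X ⟶ Z) (iY : Y ⟶ Z),
        iX ≫ pX = 𝟙 X ∧ iY ≫ pY = 𝟙 Y ∧ pX ≫ iX + pY ≫ iY = 𝟙 Z) →
      addClosure D Z
  | smd {X Y : C} : addClosure D Y → (∃ (s : X ⟶ Y) (r : Y ⟶ X), s ≫ r = 𝟙 X) →
      addClosure D X

/-- `D` is closed under finite direct sums and direct summands. -/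
def AddClosed (D : Set C) : Prop := ∀ X : C, addClosure D X → X ∈ D

/-- closed under direct sums (expressed via biproduct data). -/
def SumClosed (D : Set C) : Prop :=
  ∀ ⦃X Y Z : C⦄, X ∈ D → Y ∈ D →
    (∃ (pX : Z ⟶ X) (pY : Z ⟶ Y) (iX : X ⟶ Z) (iY : Y ⟶ Z),
      iX ≫ pX = 𝟙 X ∧ iY ≫ pY = 𝟙 Y ∧ pX ≫ iX + pY ≫ iY = 𝟙 Z) → Z ∈ D

/-- closed under direct summands. -/
def SummandClosed (D : Set C) : Prop :=
  ∀ ⦃X Y : C⦄, Y ∈ D → (∃ (s : X ⟶ Y) (r : Y ⟶ X), s ≫ r = 𝟙 X) → X ∈ D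

/-- closed under isomorphisms. -/
def IsoClosed (D : Set C) : Prop :=
  ∀ ⦃X Y : C⦄, X ∈ D → Nonempty (X ≅ Y) → Y ∈ D

/-- `f : A ⟶ X` is a left `D`-approximation of `A`. -/
def IsLeftApprox (D : Set C) {A X : C} (f : A ⟶ X) : Prop :=
  X ∈ D ∧ ∀ ⦃X' : C⦄, X' ∈ D → ∀ g : A ⟶ X', ∃ h : X ⟶ X', f ≫ h = g

/-- `f : X ⟶ A` is a right `D`-approximation of `A`. -/
def IsRightApprox (D : Set C) {X A : C} (f : X ⟶ A) : Prop :=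
  X ∈ D ∧ ∀ ⦃X' : C⦄, X' ∈ D → ∀ g : X' ⟶ A, ∃ h : X' ⟶ X, h ≫ f = g

/-- `f` is left minimal. -/
def LeftMinimal {A B : C} (f : A ⟶ B) : Prop :=
  ∀ u : B ⟶ B, f ≫ u = f → IsIso u

/-- `f` is right minimal. -/
def RightMinimal {A B : C} (f : A ⟶ B) : Prop :=
  ∀ u : A ⟶ A, u ≫ f = f → IsIso u

/-- `f` lies in the Jacobson radical of the category. -/
def InRadical {A B : C} (f : A ⟶ B) : Prop :=
  ∀ g : B ⟶ A, IsIso (𝟙 A - f ≫ g)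

/-- indecomposable object. -/
def Indec (W : C) : Prop :=
  ¬ IsZero W ∧ ∀ p : W ⟶ W, p ≫ p = p → p = 0 ∨ p = 𝟙 W

/-- two-term `R[1]`-rigid subcategory. -/
def TwoTermRigid (R X : Set C) : Prop :=
  RelRigid R X X ∧ X ⊆ star R (shiftSet R 1)

/-- two-term maximal `R[1]`-rigid subcategory. -/
def TwoTermMaximal (R X : Set C) : Prop :=
  TwoTermRigid R X ∧
  ∀ M ∈ star R (shiftSet R 1),
    RelRigid R {Z | addClosure (insert M X) Z} {Z | addClosure (insert M X) Z} → M ∈ X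

/-- two-term weak `R[1]`-cluster tilting subcategory. -/
def TwoTermWCT (R X : Set C) : Prop :=
  X ⊆ star R (shiftSet R 1) ∧ R ⊆ star (shiftSet X (-1)) X ∧
  ∀ M : C, M ∈ X ↔ (M ∈ star R (shiftSet R 1) ∧ RelRigid R {M} X ∧ RelRigid R X {M})

/-- `R(X) = { R₀ ∈ R | Hom(R₀, X) = 0 }`. -/
def RZero (R X : Set C) : Set C :=
  {A | A ∈ R ∧ ∀ B ∈ X, ∀ f : A ⟶ B, f = 0}

/-- `X` is `R[1]`-functorially finite. -/
def RFunctoriallyFinite (R X : Set C) : Prop :=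
  (∀ R₀ ∈ R, ∃ (X₀ : C) (f : R₀ ⟶ X₀), IsLeftApprox X f) ∧
  (∀ A ∈ shiftSet R 1, ∃ (X₀ : C) (f : X₀ ⟶ A), IsRightApprox X f)

/-- Data of triangles `R₀ → X^{R₀} → V^{R₀} → R₀[1]` with minimal left `X`-approximations,
defining the completion `M_X`. -/
structure MData (R X : Set C) where
  obj : ∀ R₀ : C, R₀ ∈ R → C
  cone : ∀ R₀ : C, R₀ ∈ R → C
  f : ∀ (R₀ : C) (h : R₀ ∈ R), R₀ ⟶ obj R₀ h
  g : ∀ (R₀ : C) (h : R₀ ∈ R), obj R₀ h ⟶ cone R₀ h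
  w : ∀ (R₀ : C) (h : R₀ ∈ R), cone R₀ h ⟶ R₀⟦(1:ℤ)⟧
  tri : ∀ (R₀ : C) (h : R₀ ∈ R), Triangle.mk (f R₀ h) (g R₀ h) (w R₀ h) ∈ distTriang C
  approx : ∀ (R₀ : C) (h : R₀ ∈ R), IsLeftApprox X (f R₀ h)
  minimal : ∀ (R₀ : C) (h : R₀ ∈ R), LeftMinimal (f R₀ h)

/-- `M_X = add (X ∪ {V^R | R ∈ R})`. -/
def MData.cat {R X : Set C} (d : MData R X) : Set C :=
  {Z | addClosure (X ∪ {V | ∃ (R₀ : C) (h : R₀ ∈ R), V = d.cone R₀ h}) Z}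

/-- Data of triangles `R₀ → V_{R₀} → U_{R₀} → R₀[1]` with the last map a right
`X`-approximation, defining the completion `N_X`. -/
structure NData (R X : Set C) where
  cocone : ∀ R₀ : C, R₀ ∈ R → C
  obj : ∀ R₀ : C, R₀ ∈ R → C
  a : ∀ (R₀ : C) (h : R₀ ∈ R), R₀ ⟶ cocone R₀ h
  b : ∀ (R₀ : C) (h : R₀ ∈ R), cocone R₀ h ⟶ obj R₀ h
  c : ∀ (R₀ : C) (h : R₀ ∈ R), obj R₀ h ⟶ R₀⟦(1:ℤ)⟧
  tri : ∀ (R₀ : C) (h : R₀ ∈ R), Triangle.mk (a R₀ h) (b R₀ h) (c R₀ h) ∈ distTriang C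
  approx : ∀ (R₀ : C) (h : R₀ ∈ R), IsRightApprox X (c R₀ h)

/-- `N_X = add (X ∪ {V_R | R ∈ R})`. -/
def NData.cat {R X : Set C} (d : NData R X) : Set C :=
  {Z | addClosure (X ∪ {V | ∃ (R₀ : C) (h : R₀ ∈ R), V = d.cocone R₀ h}) Z}

/-- `(M, N)` is an `X`-mutation pair. -/
def MutationPair (R X M N : Set C) : Prop :=
  M ≠ N ∧ TwoTermWCT R M ∧ TwoTermWCT R N ∧ X ⊆ M ∧ X ⊆ N ∧
  (∀ Y ∈ M, ∃ (Z X₀ : C) (z : Z ⟶ X₀) (x : X₀ ⟶ Y) (y : Y ⟶ Z⟦(1:ℤ)⟧),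
      Z ∈ N ∧ X₀ ∈ X ∧ (Triangle.mk z x y ∈ distTriang C) ∧ Factors (shiftSet R 1) y) ∧
  (∀ Z' ∈ N, ∃ (X' Y' : C) (z' : Z' ⟶ X') (x' : X' ⟶ Y') (y' : Y' ⟶ Z'⟦(1:ℤ)⟧),
      X' ∈ X ∧ Y' ∈ M ∧ (Triangle.mk z' x' y' ∈ distTriang C) ∧ Factors (shiftSet R 1) y')

/-- almost complete two-term weak `R[1]`-cluster tilting subcategory. -/
def AlmostComplete (R X : Set C) : Prop :=
  TwoTermRigid R X ∧ RFunctoriallyFinite R X ∧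
    ∃ W : C, Indec W ∧ W ∉ X ∧ TwoTermWCT R {Z | addClosure (insert W X) Z}

/-- completion of an almost complete subcategory `X`. -/
def IsCompletion (R X U : Set C) : Prop :=
  TwoTermWCT R U ∧ ∃ W : C, Indec W ∧ W ∉ X ∧ U = {Z | addClosure (insert W X) Z}

/-! Every `R₀ ∈ R` lies in a triangle `R₀ → V → X₀ → R₀[1]` whose last map is a right
`X`-approximation. The cocone `V` is again in `R * R[1]` (because `R` is rigid) and
`add (X ∪ {V})` is rigid, so for maximal `X` we get `V ∈ X`, i.e. `R ⊆ X[-1] * X`. That inclusion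
forces every `M ∈ R * R[1]` compatible with `X` to be compatible with itself, which gives the
characterisation of `X`; the converse implication is formal. -/

set_option linter.unusedSectionVars false

lemma Factors.precomp {D : Set C} {A B W : C} {f : A ⟶ B} (hf : Factors D f) (e : W ⟶ A) :
    Factors D (e ≫ f) := by
  obtain ⟨Z, g, h, hZ, rfl⟩ := hf
  exact ⟨Z, e ≫ g, h, hZ, by simp⟩

lemma Factors.postcomp {D : Set C} {A B W : C} {f : A ⟶ B} (hf : Factors D f) (e : B ⟶ W) :
    Factors D (f ≫ e) := by
  obtain ⟨Z, g, h, hZ, rfl⟩ := hf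
  exact ⟨Z, g, h ≫ e, hZ, by simp⟩

lemma Rigid.hom_eq_zero {R : Set C} (hR : Rigid R) {A Z : C} (hA : A ∈ R)
    (hZ : Z ∈ shiftSet R 1) (f : A ⟶ Z) : f = 0 := by
  obtain ⟨B, hB, ⟨ψ⟩⟩ := hZ
  rw [← cancel_mono ψ.hom, hR hA hB (f ≫ ψ.hom), zero_comp]

namespace AddClosed

variable {D : Set C} (hD : AddClosed D)
include hD

lemma mem_of_iso {A B : C} (hA : A ∈ D) (e : A ≅ B) : B ∈ D :=
  hD B (addClosure.smd (addClosure.of hA) ⟨e.inv, e.hom, e.inv_hom_id⟩)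

lemma shift_neg_one_mem {Z : C} (hZ : Z ∈ shiftSet D 1) : Z⟦(-1 : ℤ)⟧ ∈ D := by
  obtain ⟨B, hB, ⟨ω⟩⟩ := hZ
  exact hD.mem_of_iso hB
    (((shiftFunctorCompIsoId C (1 : ℤ) (-1) (by norm_num)).app B).symm ≪≫
      (shiftFunctor C (-1 : ℤ)).mapIso ω.symm)

lemma mem_of_id_eq_add_add {F A B E : C} (hA : A ∈ D) (hB : B ∈ D) (hE : E ∈ D)
    (e₁ : F ⟶ A) (f₁ : A ⟶ F) (e₂ : F ⟶ B) (f₂ : B ⟶ F) (e₃ : F ⟶ E) (f₃ : E ⟶ F)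
    (h : e₁ ≫ f₁ + e₂ ≫ f₂ + e₃ ≫ f₃ = 𝟙 F) : F ∈ D := by
  have biprod_mem : ∀ {P Q : C}, addClosure D P → addClosure D Q → addClosure D (P ⊞ Q) :=
    fun hP hQ => addClosure.sum hP hQ
      ⟨biprod.fst, biprod.snd, biprod.inl, biprod.inr, by simp, by simp, biprod.total⟩
  refine hD F (addClosure.smd (biprod_mem (.of hA) (biprod_mem (.of hB) (.of hE)))
    ⟨biprod.lift e₁ (biprod.lift e₂ e₃), biprod.desc f₁ (biprod.desc f₂ f₃), ?_⟩)
  rw [biprod.lift_desc, biprod.lift_desc, ← h, add_assoc]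

/-- The octahedral axiom, not available in a pretriangulated category, would make `F` an extension
of `R₁` by `R₀`; instead `𝟙 F` is split as a sum of maps through `R₀`, `R₁` and `Z[-1]`. -/
lemma cocone_comp_mem {R₀ V X₀ R₁ Z F : C} {a : R₀ ⟶ V} {b : V ⟶ X₀} {c : X₀ ⟶ R₀⟦(1 : ℤ)⟧}
    {u : R₁ ⟶ X₀} {v : X₀ ⟶ Z} {w : Z ⟶ R₁⟦(1 : ℤ)⟧} {i : F ⟶ V} {e : Z ⟶ F⟦(1 : ℤ)⟧}
    (hA : Triangle.mk a b c ∈ distTriang C) (hB : Triangle.mk u v w ∈ distTriang C)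
    (hC : Triangle.mk i (b ≫ v) e ∈ distTriang C) (huc : u ≫ c = 0)
    (hR₀ : R₀ ∈ D) (hR₁ : R₁ ∈ D) (hZ : Z⟦(-1 : ℤ)⟧ ∈ D) : F ∈ D := by
  have hab : a ≫ b = 0 := comp_distTriang_mor_zero₁₂ _ hA
  have huv : u ≫ v = 0 := comp_distTriang_mor_zero₁₂ _ hB
  have hibv : i ≫ b ≫ v = 0 := comp_distTriang_mor_zero₁₂ _ hC
  obtain ⟨u', hu'⟩ : ∃ u' : R₁ ⟶ V, u = u' ≫ b := Triangle.coyoneda_exact₃ _ hA u huc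
  obtain ⟨α, hα⟩ : ∃ α : R₀ ⟶ F, a = α ≫ i :=
    Triangle.coyoneda_exact₂ _ hC a (by
      show a ≫ b ≫ v = 0
      rw [← Category.assoc, hab, zero_comp])
  obtain ⟨β, hβ⟩ : ∃ β : R₁ ⟶ F, u' = β ≫ i :=
    Triangle.coyoneda_exact₂ _ hC u' (by
      show u' ≫ b ≫ v = 0
      rw [← Category.assoc, ← hu', huv])
  obtain ⟨s₂, hs₂⟩ : ∃ s₂ : F ⟶ R₁, i ≫ b = s₂ ≫ u :=
    Triangle.coyoneda_exact₂ _ hB (i ≫ b) (by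
      show (i ≫ b) ≫ v = 0
      rw [Category.assoc, hibv])
  obtain ⟨s₁, hs₁⟩ : ∃ s₁ : F ⟶ R₀, i - s₂ ≫ u' = s₁ ≫ a :=
    Triangle.coyoneda_exact₂ _ hA (i - s₂ ≫ u') (by
      show (i - s₂ ≫ u') ≫ b = 0
      rw [Preadditive.sub_comp, Category.assoc, ← hu', hs₂, sub_self])
  have hτ : (𝟙 F - s₁ ≫ α - s₂ ≫ β) ≫ i = 0 := by
    simp only [Preadditive.sub_comp, Category.id_comp, Category.assoc, ← hα, ← hβ, ← hs₁]
    abel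
  obtain ⟨g, m, hg⟩ : ∃ (g : F ⟶ Z⟦(-1 : ℤ)⟧) (m : Z⟦(-1 : ℤ)⟧ ⟶ F),
      𝟙 F - s₁ ≫ α - s₂ ≫ β = g ≫ m := by
    obtain ⟨g, hg⟩ := Triangle.coyoneda_exact₂ _ (inv_rot_of_distTriang _ hC) _ hτ
    exact ⟨g, _, hg⟩
  exact hD.mem_of_id_eq_add_add hR₀ hR₁ hZ s₁ α s₂ β g m (by rw [← hg]; abel)

end AddClosed

lemma star_star_shiftSet_subset {R : Set C} (hR : Rigid R) (haddR : AddClosed R) :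
    star R (star R (shiftSet R 1)) ⊆ star R (shiftSet R 1) := by
  rintro V ⟨R₀, X₀, a, b, c, hR₀, ⟨R₁, Z, u, v, w, hR₁, hZ, hB⟩, hA⟩
  obtain ⟨F, i, e, hC⟩ := distinguished_cocone_triangle₁ (b ≫ v)
  exact ⟨F, Z, i, b ≫ v, e,
    haddR.cocone_comp_mem hA hB hC (hR hR₁ hR₀ _) hR₀ hR₁ (haddR.shift_neg_one_mem hZ), hZ, hC⟩

namespace RelRigid

variable {R X Y : Set C}

lemma mono {X' Y' : Set C} (h : RelRigid R X Y) (hX : X' ⊆ X) (hY : Y' ⊆ Y) :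
    RelRigid R X' Y' :=
  fun _ _ hA hB => h (hX hA) (hY hB)

lemma insert_left {M : C} (hM : RelRigid R {M} Y) (h : RelRigid R X Y) :
    RelRigid R (insert M X) Y := by
  rintro A B (rfl | hA) hB
  exacts [hM rfl hB, h hA hB]

lemma insert_right {M : C} (hM : RelRigid R X {M}) (h : RelRigid R X Y) :
    RelRigid R X (insert M Y) := by
  rintro A B hA (rfl | hB)
  exacts [hM hA rfl, h hA hB]

lemma eq_zero_of_iso (h : RelRigid R X Y) {A A' B : C} (hA : A ∈ X) (e : A ≅ A') (hB : B ∈ Y)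
    (f : A' ⟶ B⟦(1 : ℤ)⟧) (hf : Factors (shiftSet R 1) f) : f = 0 := by
  rw [← cancel_epi e.hom, h hA hB _ (hf.precomp e.hom), comp_zero]

lemma addClosure_left (h : RelRigid R X Y) : RelRigid R {Z | addClosure X Z} Y := by
  intro A B hA hB f hf
  induction hA with
  | of hA => exact h hA hB f hf
  | zero hA => exact hA.eq_of_src f 0
  | sum _ _ hsum ih₁ ih₂ =>
    obtain ⟨p₁, p₂, i₁, i₂, -, -, hid⟩ := hsum
    rw [← Category.id_comp f, ← hid, Preadditive.add_comp, Category.assoc, Category.assoc,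
      ih₁ _ (hf.precomp i₁), ih₂ _ (hf.precomp i₂), comp_zero, comp_zero, add_zero]
  | smd _ hsmd ih =>
    obtain ⟨s, r, hid⟩ := hsmd
    rw [← Category.id_comp f, ← hid, Category.assoc, ih _ (hf.precomp r), comp_zero]

lemma addClosure_right (h : RelRigid R X Y) : RelRigid R X {Z | addClosure Y Z} := by
  intro A B hA hB f hf
  induction hB with
  | of hB => exact h hA hB f hf
  | zero hB => exact ((shiftFunctor C (1 : ℤ)).map_isZero hB).eq_of_tgt f 0
  | sum _ _ hsum ih₁ ih₂ =>
    obtain ⟨p₁, p₂, i₁, i₂, -, -, hid⟩ := hsum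
    rw [← Category.comp_id f, ← (shiftFunctor C (1 : ℤ)).map_id, ← hid, Functor.map_add,
      Functor.map_comp, Functor.map_comp, Preadditive.comp_add, ← Category.assoc, ← Category.assoc,
      ih₁ _ (hf.postcomp _), ih₂ _ (hf.postcomp _), zero_comp, zero_comp, add_zero]
  | smd _ hsmd ih =>
    obtain ⟨s, r, hid⟩ := hsmd
    rw [← Category.comp_id f, ← (shiftFunctor C (1 : ℤ)).map_id, ← hid, Functor.map_comp,
      ← Category.assoc, ih _ (hf.postcomp _), zero_comp]

end RelRigid

lemma TwoTermMaximal.mem {R X : Set C} (hX : TwoTermMaximal R X) {M : C}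
    (hM : M ∈ star R (shiftSet R 1)) (hMM : RelRigid R {M} {M}) (hMX : RelRigid R {M} X)
    (hXM : RelRigid R X {M}) : M ∈ X :=
  hX.2 M hM
    ((hMM.insert_right hMX).insert_left (hXM.insert_right hX.1.1)).addClosure_left.addClosure_right

section Cocone

variable {R X : Set C} {R₀ V X₀ : C} {a : R₀ ⟶ V} {b : V ⟶ X₀} {c : X₀ ⟶ R₀⟦(1 : ℤ)⟧}

lemma relRigid_left_of_distTriang (hT : Triangle.mk a b c ∈ distTriang C) (hR : Rigid R)
    (hR₀ : R₀ ∈ R) {Y : Set C} (h : RelRigid R {X₀} Y) : RelRigid R {V} Y := by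
  rintro _ B rfl hB f ⟨Z, g, g', hZ, rfl⟩
  obtain ⟨g₀, rfl⟩ : ∃ g₀ : X₀ ⟶ Z, g = b ≫ g₀ :=
    Triangle.yoneda_exact₂ _ hT g (hR.hom_eq_zero hR₀ hZ _)
  rw [Category.assoc, h rfl hB _ ⟨Z, g₀, g', hZ, rfl⟩, comp_zero]

lemma relRigid_right_of_isRightApprox (hT : Triangle.mk a b c ∈ distTriang C)
    (hXX : RelRigid R X X) (hc : IsRightApprox X c) : RelRigid R X {V} := by
  rintro A _ hA rfl f hf
  have hT₂ := rot_of_distTriang _ (rot_of_distTriang _ hT)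
  have hfb : f ≫ b⟦(1 : ℤ)⟧' = 0 := hXX hA hc.1 _ (hf.postcomp _)
  obtain ⟨g, rfl⟩ : ∃ g : A ⟶ R₀⟦(1 : ℤ)⟧, f = g ≫ (-(a⟦(1 : ℤ)⟧')) :=
    Triangle.coyoneda_exact₃ _ hT₂ f (by
      show f ≫ (-(b⟦(1 : ℤ)⟧')) = 0
      rw [Preadditive.comp_neg, hfb, neg_zero])
  obtain ⟨h, rfl⟩ := hc.2 hA g
  have hca : c ≫ (-(a⟦(1 : ℤ)⟧')) = 0 := comp_distTriang_mor_zero₁₂ _ hT₂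
  rw [Category.assoc, hca, comp_zero]

end Cocone

lemma TwoTermMaximal.subset_star {R X : Set C} (hX : TwoTermMaximal R X) (hR : Rigid R)
    (haddR : AddClosed R)
    (happ : ∀ A ∈ shiftSet R 1, ∃ (X₀ : C) (f : X₀ ⟶ A), IsRightApprox X f) :
    R ⊆ star (shiftSet X (-1)) X := by
  intro R₀ hR₀
  obtain ⟨X₀, c, hc⟩ := happ (R₀⟦(1 : ℤ)⟧) ⟨R₀, hR₀, ⟨Iso.refl _⟩⟩
  obtain ⟨V, a, b, hT⟩ := distinguished_cocone_triangle₂ c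
  have hV : V ∈ star R (shiftSet R 1) :=
    star_star_shiftSet_subset hR haddR ⟨R₀, X₀, a, b, c, hR₀, hX.1.2 hc.1, hT⟩
  have hXV : RelRigid R X {V} := relRigid_right_of_isRightApprox hT hX.1.1 hc
  have hX₀ : {X₀} ⊆ X := Set.singleton_subset_iff.mpr hc.1
  have hVX : RelRigid R {V} X := relRigid_left_of_distTriang hT hR hR₀ (hX.1.1.mono hX₀ le_rfl)
  have hVV : RelRigid R {V} {V} := relRigid_left_of_distTriang hT hR hR₀ (hXV.mono hX₀ le_rfl)
  exact ⟨X₀⟦(-1 : ℤ)⟧, V, _, a, _, ⟨X₀, hc.1, ⟨Iso.refl _⟩⟩, hX.mem hV hVV hVX hXV,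
    inv_rot_of_distTriang _ hT⟩

/-- For `M → R₃[1] → M[1]`, use the triangle `A → R₃ → X₂ → A[1]` from `R ⊆ X[-1] * X`: the
first leg dies in `X₂[1]`, so it factors through `A[1] ≅ X₁ ∈ X`, where the second leg dies. -/
lemma relRigid_self_of_subset_star {R X : Set C} (hXR : R ⊆ star (shiftSet X (-1)) X) {M : C}
    (hMX : RelRigid R {M} X) (hXM : RelRigid R X {M}) : RelRigid R {M} {M} := by
  intro A B hA hB _ ⟨Z, g, h, ⟨R₃, hR₃, ⟨ψ⟩⟩, hf⟩
  rw [Set.mem_singleton_iff] at hA hB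
  subst A B hf
  obtain ⟨A, X₂, q, r, t, ⟨X₁, hX₁, ⟨ω⟩⟩, hX₂, hT⟩ := hXR hR₃
  have hT₃ := rot_of_distTriang _ (rot_of_distTriang _ (rot_of_distTriang _ hT))
  have hgr : (g ≫ ψ.hom) ≫ r⟦(1 : ℤ)⟧' = 0 :=
    hMX rfl hX₂ _ ⟨R₃⟦(1 : ℤ)⟧, g ≫ ψ.hom, r⟦(1 : ℤ)⟧', ⟨R₃, hR₃, ⟨Iso.refl _⟩⟩, rfl⟩
  obtain ⟨g₀, hg₀⟩ : ∃ g₀ : M ⟶ A⟦(1 : ℤ)⟧, g ≫ ψ.hom = g₀ ≫ (-(q⟦(1 : ℤ)⟧')) :=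
    Triangle.coyoneda_exact₂ _ hT₃ _ (by
      show (g ≫ ψ.hom) ≫ (-(r⟦(1 : ℤ)⟧')) = 0
      rw [Preadditive.comp_neg, hgr, neg_zero])
  have eA : X₁ ≅ A⟦(1 : ℤ)⟧ :=
    ((shiftFunctorCompIsoId C (-1 : ℤ) 1 (by norm_num)).app X₁).symm ≪≫
      (shiftFunctor C (1 : ℤ)).mapIso ω.symm
  have hqh : (-(q⟦(1 : ℤ)⟧') ≫ ψ.inv) ≫ h = 0 :=
    hXM.eq_zero_of_iso hX₁ eA rfl _ ⟨Z, _, h, ⟨R₃, hR₃, ⟨ψ⟩⟩, rfl⟩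
  calc g ≫ h = ((g ≫ ψ.hom) ≫ ψ.inv) ≫ h := by simp
    _ = g₀ ≫ (-(q⟦(1 : ℤ)⟧') ≫ ψ.inv) ≫ h := by rw [hg₀]; simp
    _ = 0 := by rw [hqh, comp_zero]

lemma TwoTermMaximal.twoTermWCT {R X : Set C} (hX : TwoTermMaximal R X) (hR : Rigid R)
    (haddR : AddClosed R)
    (happ : ∀ A ∈ shiftSet R 1, ∃ (X₀ : C) (f : X₀ ⟶ A), IsRightApprox X f) :
    TwoTermWCT R X := by
  have hXR := hX.subset_star hR haddR happ
  refine ⟨hX.1.2, hXR, fun M => ⟨fun hM => ?_, fun ⟨hM, hMX, hXM⟩ => ?_⟩⟩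
  · have hMX : {M} ⊆ X := Set.singleton_subset_iff.mpr hM
    exact ⟨hX.1.2 hM, hX.1.1.mono hMX le_rfl, hX.1.1.mono le_rfl hMX⟩
  · exact hX.mem hM (relRigid_self_of_subset_star hXR hMX hXM) hMX hXM

lemma TwoTermWCT.twoTermMaximal {R X : Set C} (hX : TwoTermWCT R X) : TwoTermMaximal R X := by
  refine ⟨⟨fun A B hA hB => ((hX.2.2 B).1 hB).2.2 hA rfl, hX.1⟩, fun M hM h => ?_⟩
  have hsub : insert M X ⊆ {Z | addClosure (insert M X) Z} := fun _ => addClosure.of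
  have hins := h.mono hsub hsub
  have hM' : {M} ⊆ insert M X := Set.singleton_subset_iff.mpr (Set.mem_insert M X)
  exact (hX.2.2 M).2
    ⟨hM, hins.mono hM' (Set.subset_insert M X), hins.mono (Set.subset_insert M X) hM'⟩

theorem statement_9_general (R X : Set C)
    (hrig : Rigid R) (haddR : AddClosed R)
    (happ : ∀ A ∈ shiftSet R 1, ∃ (X₀ : C) (f : X₀ ⟶ A), IsRightApprox X f) :
    TwoTermMaximal R X ↔ TwoTermWCT R X :=
  ⟨fun hX => hX.twoTermWCT hrig haddR happ, TwoTermWCT.twoTermMaximal⟩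

theorem statement_9 (hKS : KrullSchmidtCat C) (R X : Set C)
    (hrig : Rigid R) (haddR : AddClosed R) (haddX : AddClosed X)
    (hsub : X ⊆ star R (shiftSet R 1))
    (happ : ∀ A ∈ shiftSet R 1, ∃ (X₀ : C) (f : X₀ ⟶ A), IsRightApprox X f) :
    TwoTermMaximal R X ↔ TwoTermWCT R X :=
  statement_9_general R X hrig haddR happ

end RelCT
end

section
/- Let X be an R[1]-functorially finite two-term R[1]-rigid subcategory. Then R(M_X) = R(X) and N_X ∩ R[1] = X ∩ R[1], where M_X is the 'co-Bongartz' completion obtained from left X-approximations of objects in R, and N_X is the completion obtained from right X-approximations of objects in R[1]. -/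
open CategoryTheory CategoryTheory.Limits CategoryTheory.Pretriangulated

universe v u w

/-!
A map `R' ⟶ V^R` from an object `R'` of `R` with `Hom(R', X) = 0` composes to zero with
`V^R ⟶ R[1]` by rigidity of `R`, so it lifts to `X^R ∈ X` and vanishes. Dually, a map
`V_R ⟶ R'[1]` vanishes on `R`, so it factors through `U_R ∈ X`. Both properties survive
finite sums and summands, hence hold on all of `M_X`, resp. `N_X`. An object of `N_X ∩ R[1]`
then has its identity factoring through `X`, so it is a summand of an object of `X`.
-/

namespace RelCT

section

variable {C : Type u} [Category.{v} C] {X : Set C}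

lemma Factors.comp_left {A B B' : C} {f : B ⟶ B'} (hf : Factors X f) (s : A ⟶ B) :
    Factors X (s ≫ f) := by
  obtain ⟨Z, g, h, hZ, rfl⟩ := hf
  exact ⟨Z, s ≫ g, h, hZ, (Category.assoc _ _ _).symm⟩

lemma summandClosed_factors (Z : C) : SummandClosed {Y : C | ∀ f : Y ⟶ Z, Factors X f} := by
  rintro Y' Y hY ⟨s, r, hsr⟩ f
  have hf : f = s ≫ (r ≫ f) := by rw [← Category.assoc, hsr, Category.id_comp]
  rw [hf]
  exact (hY _).comp_left s

variable [Preadditive C]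

lemma addClosure_subset {D E : Set C} (hDE : D ⊆ E) (hzero : ∀ Y : C, IsZero Y → Y ∈ E)
    (hsum : SumClosed E) (hsmd : SummandClosed E) {Y : C} (hY : addClosure D Y) : Y ∈ E := by
  induction hY with
  | of h => exact hDE h
  | zero h => exact hzero _ h
  | sum _ _ hdata ih₁ ih₂ => exact hsum ih₁ ih₂ hdata
  | smd _ hdata ih => exact hsmd ih hdata

lemma sumClosed_homZero (A : C) : SumClosed {Y : C | ∀ f : A ⟶ Y, f = 0} := by
  rintro Y₁ Y₂ Z h₁ h₂ ⟨p₁, p₂, i₁, i₂, -, -, htot⟩ f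
  calc f = f ≫ (p₁ ≫ i₁ + p₂ ≫ i₂) := by rw [htot, Category.comp_id]
    _ = (f ≫ p₁) ≫ i₁ + (f ≫ p₂) ≫ i₂ := by simp only [Preadditive.comp_add, Category.assoc]
    _ = 0 := by rw [h₁ (f ≫ p₁), h₂ (f ≫ p₂), zero_comp, zero_comp, add_zero]

lemma summandClosed_homZero (A : C) : SummandClosed {Y : C | ∀ f : A ⟶ Y, f = 0} := by
  rintro Y' Y hY ⟨s, r, hsr⟩ f
  calc f = (f ≫ s) ≫ r := by rw [Category.assoc, hsr, Category.comp_id]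
    _ = 0 := by rw [hY (f ≫ s), zero_comp]

lemma hom_eq_zero_of_addClosure (A : C) {D : Set C} (hD : ∀ B ∈ D, ∀ f : A ⟶ B, f = 0)
    {Y : C} (hY : addClosure D Y) (f : A ⟶ Y) : f = 0 :=
  addClosure_subset hD (fun _ hZ f => hZ.eq_of_tgt f 0) (sumClosed_homZero A)
    (summandClosed_homZero A) hY f

lemma mem_of_factors_id (haddX : AddClosed X) {Z : C} (h : Factors X (𝟙 Z)) : Z ∈ X := by
  obtain ⟨W, g, k, hW, hgk⟩ := h
  exact haddX Z (addClosure.smd (addClosure.of hW) ⟨g, k, hgk.symm⟩)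

variable [HasBinaryBiproducts C]

lemma Factors.add (haddX : AddClosed X) {A B : C} {f f' : A ⟶ B}
    (hf : Factors X f) (hf' : Factors X f') : Factors X (f + f') := by
  obtain ⟨Z, g, h, hZ, rfl⟩ := hf
  obtain ⟨Z', g', h', hZ', rfl⟩ := hf'
  refine ⟨Z ⊞ Z', biprod.lift g g', biprod.desc h h', ?_, by simp⟩
  exact haddX _ (addClosure.sum (addClosure.of hZ) (addClosure.of hZ')
    ⟨biprod.fst, biprod.snd, biprod.inl, biprod.inr, by simp, by simp, biprod.total⟩)

lemma sumClosed_factors (haddX : AddClosed X) (Z : C) :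
    SumClosed {Y : C | ∀ f : Y ⟶ Z, Factors X f} := by
  rintro Y₁ Y₂ W h₁ h₂ ⟨p₁, p₂, i₁, i₂, -, -, htot⟩ f
  have hf : f = p₁ ≫ (i₁ ≫ f) + p₂ ≫ (i₂ ≫ f) := by
    rw [← Category.assoc, ← Category.assoc, ← Preadditive.add_comp, htot, Category.id_comp]
  rw [hf]
  exact ((h₁ _).comp_left p₁).add haddX ((h₂ _).comp_left p₂)

lemma factors_of_addClosure (haddX : AddClosed X) (Z : C) {D : Set C}
    (hD : ∀ Y ∈ D, ∀ f : Y ⟶ Z, Factors X f) {Y : C} (hY : addClosure D Y) (f : Y ⟶ Z) :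
    Factors X f :=
  addClosure_subset hD
    (fun Y hY f => ⟨Y, 𝟙 Y, f, haddX Y (addClosure.zero hY), (Category.id_comp f).symm⟩)
    (sumClosed_factors haddX Z) (summandClosed_factors Z) hY f

end

variable {C : Type u} [Category.{v} C] [Preadditive C] [HasZeroObject C]
  [HasShift C ℤ] [∀ n : ℤ, (CategoryTheory.shiftFunctor C n).Additive] [Pretriangulated C]

variable {R X : Set C}

lemma MData.hom_cone_eq_zero (hrig : Rigid R) (d : MData R X) {A : C} (hA : A ∈ R)
    (hA0 : ∀ B ∈ X, ∀ f : A ⟶ B, f = 0) {R₀ : C} (h₀ : R₀ ∈ R) (f : A ⟶ d.cone R₀ h₀) :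
    f = 0 := by
  obtain ⟨g, hg⟩ := Triangle.coyoneda_exact₃ _ (d.tri R₀ h₀) f (hrig hA h₀ _)
  have hg0 : g = 0 := hA0 _ (d.approx R₀ h₀).1 g
  rw [hg, hg0, zero_comp]
  rfl

lemma MData.rZero_cat (hrig : Rigid R) (d : MData R X) : RZero R d.cat = RZero R X := by
  ext A
  constructor
  · rintro ⟨hA, hA0⟩
    exact ⟨hA, fun B hB => hA0 B (addClosure.of (Or.inl hB))⟩
  · rintro ⟨hA, hA0⟩
    refine ⟨hA, fun B hB => hom_eq_zero_of_addClosure A ?_ hB⟩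
    rintro B (hB | ⟨R₀, h₀, rfl⟩)
    · exact hA0 B hB
    · exact d.hom_cone_eq_zero hrig hA hA0 h₀

lemma NData.factors_of_cocone (hrig : Rigid R) (e : NData R X) {R₀ Z : C} (h₀ : R₀ ∈ R)
    (hZ : Z ∈ shiftSet R 1) (f : e.cocone R₀ h₀ ⟶ Z) : Factors X f := by
  obtain ⟨R₁, hR₁, ⟨ι⟩⟩ := hZ
  have ha : e.a R₀ h₀ ≫ f = 0 := by
    simpa using hrig h₀ hR₁ (e.a R₀ h₀ ≫ f ≫ ι.hom) =≫ ι.inv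
  obtain ⟨g, hg⟩ := Triangle.yoneda_exact₂ _ (e.tri R₀ h₀) f ha
  exact ⟨e.obj R₀ h₀, e.b R₀ h₀, g, (e.approx R₀ h₀).1, hg⟩

lemma NData.cat_inter_shiftSet (hrig : Rigid R) (haddX : AddClosed X) (e : NData R X) :
    e.cat ∩ shiftSet R 1 = X ∩ shiftSet R 1 := by
  ext Z
  constructor
  · rintro ⟨hZ, hZR⟩
    refine ⟨mem_of_factors_id haddX (factors_of_addClosure haddX Z ?_ hZ (𝟙 Z)), hZR⟩
    rintro Y (hY | ⟨R₀, h₀, rfl⟩) f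
    · exact ⟨Y, 𝟙 Y, f, hY, (Category.id_comp f).symm⟩
    · exact e.factors_of_cocone hrig h₀ hZR f
  · rintro ⟨hZ, hZR⟩
    exact ⟨addClosure.of (Or.inl hZ), hZR⟩

theorem statement_11_general (R X : Set C)
    (hrig : Rigid R) (haddX : AddClosed X)
    (d : MData R X) (e : NData R X) :
    RZero R d.cat = RZero R X ∧ e.cat ∩ shiftSet R 1 = X ∩ shiftSet R 1 :=
  ⟨d.rZero_cat hrig, e.cat_inter_shiftSet hrig haddX⟩

theorem statement_11 (hKS : KrullSchmidtCat C) (R X : Set C)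
    (hrig : Rigid R) (haddR : AddClosed R) (haddX : AddClosed X)
    (hX : TwoTermRigid R X) (hff : RFunctoriallyFinite R X)
    (d : MData R X) (e : NData R X) :
    RZero R d.cat = RZero R X ∧ e.cat ∩ shiftSet R 1 = X ∩ shiftSet R 1 :=
  statement_11_general R X hrig haddX d e

end RelCT
end
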